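/- arXiv:1608.00767 — 6 statements merged into one kernel-verified Lean document; each statement's English description precedes it below -/
import Mathlib

section
/- Let J_1,...,J_k be a partition of {1,...,n} into k ≥ 2 nonempty parts. Define W = Σ_k |J_k|(n−|J_k|)². Then W ≥ (1/4) n²(k−1). -/
/-- For a partition `J_1,…,J_k` of `{1,…,n}` into `k ≥ 2` nonempty parts,
`W = Σ_j |J_j|(n−|J_j|)² ≥ (1/4) n² (k−1)`. -/
theorem partition_W_lower_bound_parts
    (n k : ℕ) (hk : 2 ≤ k) (J : Fin k → Finset ℕ)
    (hne : ∀ j, (J j).Nonempty)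
    (hdisj : ∀ j j' : Fin k, j ≠ j' → Disjoint (J j) (J j'))
    (hunion : Finset.univ.biUnion J = Finset.Icc 1 n) :
    (∑ j : Fin k, ((J j).card : ℚ) * ((n : ℚ) - ((J j).card : ℚ)) ^ 2) ≥
      (1 / 4) * (n : ℚ) ^ 2 * ((k : ℚ) - 1) := by
  classical
  set m : Fin k → ℕ := fun j => (J j).card with hm
  have hsum : ∑ j, m j = n := by
    have := Finset.card_biUnion (s := (Finset.univ : Finset (Fin k))) (t := J)
      (fun j _ j' _ h => hdisj j j' h)
    rw [hunion, Nat.card_Icc] at this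
    simpa using this.symm
  have hpos : ∀ j, 1 ≤ m j := fun j => Finset.card_pos.mpr (hne j)
  have hle : ∀ j, m j ≤ n := by
    intro j
    calc m j ≤ ∑ i, m i :=
          Finset.single_le_sum (fun i _ => Nat.zero_le _) (Finset.mem_univ j)
      _ = n := hsum
  set B : Finset (Fin k) := Finset.univ.filter (fun j => n < 2 * m j) with hB
  have hBcard : B.card ≤ 1 := by
    rw [Finset.card_le_one]
    intro a ha b hb
    by_contra hab
    simp only [hB, Finset.mem_filter] at ha hb
    have hsub : ({a, b} : Finset (Fin k)) ⊆ Finset.univ := Finset.subset_univ _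
    have hpair : m a + m b ≤ n := by
      have := Finset.sum_le_sum_of_subset (f := m) hsub
      rw [Finset.sum_pair hab, hsum] at this
      exact this
    omega
  have hCc : k - 1 ≤ Bᶜ.card := by
    have : Bᶜ.card = k - B.card := by
      rw [Finset.card_compl, Fintype.card_fin]
    omega
  -- each term is nonneg
  have hterm_nonneg : ∀ j : Fin k,
      (0:ℚ) ≤ (m j : ℚ) * ((n : ℚ) - (m j : ℚ)) ^ 2 := by
    intro j; positivity
  have hstep1 : ∑ j ∈ Bᶜ, (m j : ℚ) * ((n : ℚ) - (m j : ℚ)) ^ 2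
      ≤ ∑ j : Fin k, (m j : ℚ) * ((n : ℚ) - (m j : ℚ)) ^ 2 :=
    Finset.sum_le_sum_of_subset_of_nonneg (Finset.subset_univ _)
      (fun j _ _ => hterm_nonneg j)
  have hstep2 : ∀ j ∈ Bᶜ, (1/4 : ℚ) * (n:ℚ)^2 ≤ (m j : ℚ) * ((n : ℚ) - (m j : ℚ)) ^ 2 := by
    intro j hj
    simp only [hB, Finset.mem_compl, Finset.mem_filter, Finset.mem_univ, true_and,
      not_lt] at hj
    have h1 : (1 : ℚ) ≤ (m j : ℚ) := by exact_mod_cast hpos j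
    have h2 : (n:ℚ)/2 ≤ (n : ℚ) - (m j : ℚ) := by
      have : (2 * m j : ℚ) ≤ (n : ℚ) := by exact_mod_cast hj
      linarith
    have h3 : (0:ℚ) ≤ (n:ℚ)/2 := by positivity
    have hsq : ((n:ℚ)/2)^2 ≤ ((n : ℚ) - (m j : ℚ))^2 := by
      apply pow_le_pow_left₀ h3 h2
    calc (1/4 : ℚ) * (n:ℚ)^2 = 1 * ((n:ℚ)/2)^2 := by ring
      _ ≤ (m j : ℚ) * ((n : ℚ) - (m j : ℚ)) ^ 2 := by
          apply mul_le_mul h1 hsq (by positivity) (by linarith)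
  have hstep3 : (Bᶜ.card : ℚ) * ((1/4 : ℚ) * (n:ℚ)^2)
      ≤ ∑ j ∈ Bᶜ, (m j : ℚ) * ((n : ℚ) - (m j : ℚ)) ^ 2 := by
    have := Finset.card_nsmul_le_sum (s := Bᶜ)
      (f := fun j => (m j : ℚ) * ((n : ℚ) - (m j : ℚ)) ^ 2)
      (n := (1/4 : ℚ) * (n:ℚ)^2) hstep2
    simpa [nsmul_eq_mul] using this
  have hk1 : (k : ℚ) - 1 ≤ (Bᶜ.card : ℚ) := by
    have : ((k - 1 : ℕ) : ℚ) ≤ (Bᶜ.card : ℚ) := by exact_mod_cast hCc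
    have hk1' : ((k - 1 : ℕ) : ℚ) = (k : ℚ) - 1 := by
      have : 1 ≤ k := by omega
      push_cast [this]; ring
    linarith
  have hfinal : (1 / 4) * (n : ℚ) ^ 2 * ((k : ℚ) - 1)
      ≤ (Bᶜ.card : ℚ) * ((1/4 : ℚ) * (n:ℚ)^2) := by
    have h4 : (0:ℚ) ≤ (1/4 : ℚ) * (n:ℚ)^2 := by positivity
    nlinarith
  simp only [hm] at hstep1 hstep3 ⊢
  linarith
end

section
/- Let J_1,...,J_k be a partition of {1,...,n}, and for a fixed part J with |J| = t, every element a ∈ J satisfies Σ_{b ∉ J} |a−b| ≥ (n−t)²/4. Consequently Σ over all pairs (a,b) in distinct parts of |a−b| is at least (1/4)Σ_j |J_j|(n−|J_j|)². -/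
open Finset

lemma sum_pos_int (F : Finset ℤ) (h : ∀ x ∈ F, 1 ≤ x) :
    (F.card : ℤ) * (F.card + 1) ≤ 2 * ∑ x ∈ F, x := by
  induction F using Finset.strongInduction with
  | _ F ih =>
    rcases F.eq_empty_or_nonempty with rfl | hF
    · simp
    · set m := F.max' hF with hm
      have hmF : m ∈ F := F.max'_mem hF
      have hm1 : 1 ≤ m := h m hmF
      have hsub : F ⊆ Finset.Icc 1 m := fun x hx =>
        Finset.mem_Icc.mpr ⟨h x hx, F.le_max' x hx⟩
      have hcard : (F.card : ℤ) ≤ m := by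
        have h1 := Finset.card_le_card hsub
        rw [Int.card_Icc] at h1
        omega
      have hih := ih (F.erase m) (Finset.erase_ssubset hmF)
        (fun x hx => h x (Finset.mem_of_mem_erase hx))
      have hsum : m + ∑ x ∈ F.erase m, x = ∑ x ∈ F, x :=
        Finset.add_sum_erase F id hmF
      have hc : ((F.erase m).card : ℤ) = (F.card : ℤ) - 1 := by
        rw [Finset.card_erase_of_mem hmF]
        have : 1 ≤ F.card := Finset.card_pos.mpr hF
        omega
      rw [hc] at hih
      linarith

lemma sum_abs_int (F : Finset ℤ) (h : ∀ x ∈ F, x ≠ 0) :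
    (F.card : ℤ) ^ 2 ≤ 4 * ∑ x ∈ F, |x| := by
  set P := F.filter (fun x => 0 < x) with hP
  set N := F.filter (fun x => ¬ 0 < x) with hN
  have hsplit : ∑ x ∈ P, |x| + ∑ x ∈ N, |x| = ∑ x ∈ F, |x| :=
    Finset.sum_filter_add_sum_filter_not F _ _
  have hcard : P.card + N.card = F.card :=
    Finset.card_filter_add_card_filter_not _
  have hPpos : ∀ x ∈ P, 1 ≤ x := by
    intro x hx
    have := (Finset.mem_filter.mp hx).2
    omega
  have hPsum : ∑ x ∈ P, |x| = ∑ x ∈ P, x :=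
    Finset.sum_congr rfl fun x hx => abs_of_pos (Finset.mem_filter.mp hx).2
  have hNneg : ∀ x ∈ N, x < 0 := by
    intro x hx
    have h1 := (Finset.mem_filter.mp hx).2
    have h2 := h x (Finset.mem_filter.mp hx).1
    omega
  have hNsum : ∑ x ∈ N, |x| = ∑ x ∈ N.image Neg.neg, x := by
    rw [Finset.sum_image (by intro a _ b _ hab; omega)]
    exact Finset.sum_congr rfl fun x hx => abs_of_neg (hNneg x hx)
  have hNcard : (N.image Neg.neg).card = N.card :=
    Finset.card_image_of_injective _ neg_injective
  have h1 := sum_pos_int P hPpos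
  have h2 := sum_pos_int (N.image Neg.neg) (by
    intro x hx
    obtain ⟨y, hy, rfl⟩ := Finset.mem_image.mp hx
    have := hNneg y hy
    omega)
  rw [hNcard] at h2
  have hc : (P.card : ℤ) + N.card = F.card := by exact_mod_cast hcard
  nlinarith [sq_nonneg ((P.card : ℤ) - N.card), hsplit, hPsum, hNsum]

lemma key_bound (n : ℕ) (S : Finset ℕ) (hS : S ⊆ Finset.Icc 1 n) (a : ℕ) (ha : a ∈ S) :
    (∑ b ∈ Finset.Icc 1 n \ S, |(a : ℚ) - (b : ℚ)|) ≥ ((n : ℚ) - (S.card : ℚ)) ^ 2 / 4 := by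
  set T := Finset.Icc 1 n \ S with hT
  have htle : S.card ≤ n := by
    have := Finset.card_le_card hS
    simpa using this
  have hTcard : T.card = n - S.card := by
    rw [hT, Finset.card_sdiff_of_subset hS, Nat.card_Icc]
    omega
  set F := T.image (fun b : ℕ => (b : ℤ) - (a : ℤ)) with hF
  have hinj : Set.InjOn (fun b : ℕ => (b : ℤ) - (a : ℤ)) T := by
    intro x _ y _ hxy
    simp only at hxy
    omega
  have hFcard : F.card = T.card := Finset.card_image_of_injOn hinj
  have hFne : ∀ x ∈ F, x ≠ 0 := by
    intro x hx
    obtain ⟨b, hb, rfl⟩ := Finset.mem_image.mp hx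
    have hbS : b ∉ S := (Finset.mem_sdiff.mp hb).2
    intro h0
    have : b = a := by omega
    exact hbS (this ▸ ha)
  have hbd := sum_abs_int F hFne
  have hsum : ∑ x ∈ F, |x| = ∑ b ∈ T, |(b : ℤ) - (a : ℤ)| :=
    Finset.sum_image (fun x hx y hy hxy => hinj hx hy hxy)
  rw [hsum, hFcard, hTcard] at hbd
  have hQ : ∑ b ∈ T, |(a : ℚ) - (b : ℚ)| = ((∑ b ∈ T, |(b : ℤ) - (a : ℤ)| : ℤ) : ℚ) := by
    push_cast
    refine Finset.sum_congr rfl fun b _ => ?_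
    rw [abs_sub_comm]
  rw [ge_iff_le, hQ]
  have hcast : (((n - S.card : ℕ) : ℤ) : ℚ) = (n : ℚ) - (S.card : ℚ) := by
    push_cast [Nat.cast_sub htle]
    ring
  have : (((n - S.card : ℕ) : ℤ) ^ 2 : ℚ) ≤ ((4 * ∑ b ∈ T, |(b : ℤ) - (a : ℤ)| : ℤ) : ℚ) := by
    exact_mod_cast hbd
  rw [hcast] at this
  push_cast at this ⊢
  linarith

/-- For a partition `J_1,…,J_k` of `{1,…,n}`: (a) for a fixed part `J j₀`
of size `t` and any `a ∈ J j₀`, `Σ_{b ∉ J j₀} |a−b| ≥ (n−t)²/4`; consequently (b) the sum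
over pairs in distinct parts of `|a−b|` is at least `(1/4) Σ_j |J_j| (n−|J_j|)²`. -/
theorem partition_pair_distance_bound
    (n k : ℕ) (J : Fin k → Finset ℕ)
    (hne : ∀ j, (J j).Nonempty)
    (hdisj : ∀ j j' : Fin k, j ≠ j' → Disjoint (J j) (J j'))
    (hunion : Finset.univ.biUnion J = Finset.Icc 1 n) :
    (∀ j₀ : Fin k, ∀ a ∈ J j₀,
      (∑ b ∈ Finset.Icc 1 n \ J j₀, |(a : ℚ) - (b : ℚ)|) ≥
        ((n : ℚ) - ((J j₀).card : ℚ)) ^ 2 / 4) ∧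
    (∑ j : Fin k, ∑ a ∈ J j, ∑ b ∈ Finset.Icc 1 n \ J j, |(a : ℚ) - (b : ℚ)|) ≥
      (1 / 4) * ∑ j : Fin k, ((J j).card : ℚ) * ((n : ℚ) - ((J j).card : ℚ)) ^ 2 := by
  have hsub : ∀ j, J j ⊆ Finset.Icc 1 n := by
    intro j
    rw [← hunion]
    exact Finset.subset_biUnion_of_mem J (Finset.mem_univ j)
  have parta : ∀ j₀ : Fin k, ∀ a ∈ J j₀,
      (∑ b ∈ Finset.Icc 1 n \ J j₀, |(a : ℚ) - (b : ℚ)|) ≥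
        ((n : ℚ) - ((J j₀).card : ℚ)) ^ 2 / 4 :=
    fun j₀ a ha => key_bound n (J j₀) (hsub j₀) a ha
  refine ⟨parta, ?_⟩
  rw [ge_iff_le, Finset.mul_sum]
  refine Finset.sum_le_sum fun j _ => ?_
  calc 1 / 4 * (((J j).card : ℚ) * ((n : ℚ) - ((J j).card : ℚ)) ^ 2)
      = ∑ a ∈ J j, ((n : ℚ) - ((J j).card : ℚ)) ^ 2 / 4 := by
        rw [Finset.sum_const, nsmul_eq_mul]; ring
    _ ≤ ∑ a ∈ J j, ∑ b ∈ Finset.Icc 1 n \ J j, |(a : ℚ) - (b : ℚ)| :=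
        Finset.sum_le_sum fun a ha => parta j a ha
end

section
/- Suppose n_C ≥ n_B ≥ 1 and f*: B → C* is a non-decreasing function, where B = {−(n_B−1)/2, −(n_B−3)/2, ..., (n_B−1)/2} and C* = {−n_C/2, −n_C/2 + 1, ..., n_C/2}. Then for every integer q ≥ 0, the number of b ∈ B with |b − f*(b)| ≥ (n_B + n_C − 1)/2 − q is at most q + 1. -/
/-!
Write `b = i - (n_B - 1)/2` and `f*(b) = m_i - n_C/2` with `m` monotone in `[0, n_C]`. A deviation
of at least `(n_B + n_C - 1)/2 - q` means either `m_i + n_B ≤ i + q + 1` (`f*(b)` far below `b`,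
forcing `i` into the top `q + 1` positions) or `i + n_C ≤ m_i + q` (`f*(b)` far above `b`, forcing
`i` into the bottom `q + 1` positions). Shifting the second kind up by `n_B - 1 - q` lands it in the
same top window, and monotonicity of `m` shows the shifted set misses the first kind, so the two
kinds together number at most `q + 1`.
-/

open Finset

namespace BlockIntertwining

variable {n c q : ℕ} {m : Fin n → ℕ}

def lowDeviation (m : Fin n → ℕ) (q : ℕ) : Finset (Fin n) :=
  {i | m i + n ≤ i + q + 1}

def highDeviation (m : Fin n → ℕ) (c q : ℕ) : Finset (Fin n) :=
  {i | (i : ℕ) + c ≤ m i + q}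

theorem le_abs_deviation_iff (i k n c q : ℕ) :
    ((n : ℝ) + c - 1) / 2 - q ≤ |((i : ℝ) - ((n : ℝ) - 1) / 2) - ((k : ℝ) - c / 2)| ↔
      k + n ≤ i + q + 1 ∨ i + c ≤ k + q := by
  rw [le_abs]
  refine or_congr ?_ ?_
  · rw [← Nat.cast_le (α := ℝ)]; push_cast; constructor <;> intro <;> linarith
  · rw [← Nat.cast_le (α := ℝ)]; push_cast; constructor <;> intro <;> linarith

theorem val_add_ne_of_mem_highDeviation_of_mem_lowDeviation (hm : Monotone m) (hqn : q < n)
    (hqc : q < c) {i j : Fin n} (hi : i ∈ highDeviation m c q) (hj : j ∈ lowDeviation m q) :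
    (i : ℕ) + (n - 1 - q) ≠ j := by
  simp only [highDeviation, lowDeviation, mem_filter_univ] at hi hj
  intro hij
  have hmij : m i ≤ m j := hm (Fin.le_def.2 (by omega))
  omega

theorem card_lowDeviation_add_card_highDeviation_le (hm : Monotone m) (hmc : ∀ i, m i ≤ c)
    (hqn : q < n) (hqc : q < c) :
    #(lowDeviation m q) + #(highDeviation m c q) ≤ q + 1 := by
  set shift : Fin n → ℕ := fun i => i + (n - 1 - q)
  have hlow : (lowDeviation m q).image Fin.val ⊆ Ico (n - 1 - q) n := by
    intro k hk
    obtain ⟨j, hj, rfl⟩ := mem_image.1 hk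
    simp only [lowDeviation, mem_filter_univ] at hj
    simp only [mem_Ico]
    omega
  have hhigh : (highDeviation m c q).image shift ⊆ Ico (n - 1 - q) n := by
    intro k hk
    obtain ⟨i, hi, rfl⟩ := mem_image.1 hk
    simp only [highDeviation, mem_filter_univ] at hi
    have := hmc i
    simp only [shift, mem_Ico]
    omega
  have hdisj : Disjoint ((lowDeviation m q).image Fin.val) ((highDeviation m c q).image shift) := by
    refine disjoint_left.2 fun k hlow hhigh => ?_
    obtain ⟨j, hj, rfl⟩ := mem_image.1 hlow
    obtain ⟨i, hi, hij⟩ := mem_image.1 hhigh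
    exact val_add_ne_of_mem_highDeviation_of_mem_lowDeviation hm hqn hqc hi hj hij
  have hshift : Function.Injective shift := fun i j h => Fin.ext (by simpa [shift] using h)
  calc #(lowDeviation m q) + #(highDeviation m c q)
      = #((lowDeviation m q).image Fin.val ∪ (highDeviation m c q).image shift) := by
        rw [card_union_of_disjoint hdisj, card_image_of_injective _ Fin.val_injective,
          card_image_of_injective _ hshift]
    _ ≤ #(Ico (n - 1 - q) n) := card_le_card (union_subset hlow hhigh)
    _ = q + 1 := by rw [Nat.card_Ico]; omega

end BlockIntertwining

open BlockIntertwining in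
theorem block_intertwining_count_bound_general
    (nB nC : ℕ) (hBC : nB ≤ nC)
    (f : Fin nB → ℝ)
    (hrange : ∀ i, ∃ m : ℕ, m ≤ nC ∧ f i = (m : ℝ) - (nC : ℝ) / 2)
    (hmono : Monotone f) (q : ℕ) :
    {i : Fin nB |
        |((i : ℝ) - ((nB : ℝ) - 1) / 2) - f i| ≥ ((nB : ℝ) + (nC : ℝ) - 1) / 2 - q}.ncard
      ≤ q + 1 := by
  choose m hmc hfm using hrange
  have hm : Monotone m := fun i j hij => by
    have h := hmono hij
    rw [hfm, hfm] at h
    exact_mod_cast (by linarith : (m i : ℝ) ≤ m j)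
  have hset : {i : Fin nB |
      |((i : ℝ) - ((nB : ℝ) - 1) / 2) - f i| ≥ ((nB : ℝ) + (nC : ℝ) - 1) / 2 - q} =
        ↑(lowDeviation m q ∪ highDeviation m nC q) := by
    ext i
    simp only [Set.mem_ofPred_eq, ge_iff_le, hfm, le_abs_deviation_iff, coe_union, Set.mem_union,
      mem_coe, lowDeviation, highDeviation, mem_filter_univ]
  rw [hset, Set.ncard_coe_finset]
  rcases le_or_gt nB q with hq | hq
  · exact (card_le_univ _).trans (by rw [Fintype.card_fin]; omega)
  · exact (card_union_le _ _).trans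
      (card_lowDeviation_add_card_highDeviation_le hm hmc hq (hq.trans_le hBC))

/-- With `B = {−(n_B−1)/2, …, (n_B−1)/2}` (indexed by `Fin n_B` via
`i ↦ i − (n_B−1)/2`) and `C* = {−n_C/2, …, n_C/2}`, if `n_C ≥ n_B ≥ 1` and
`f* : B → C*` is non-decreasing, then for every integer `q ≥ 0` the number of `b ∈ B`
with `|b − f*(b)| ≥ (n_B + n_C − 1)/2 − q` is at most `q + 1`. -/
theorem block_intertwining_count_bound
    (nB nC : ℕ) (hnB : 1 ≤ nB) (hBC : nB ≤ nC)
    (f : Fin nB → ℝ)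
    (hrange : ∀ i, ∃ m : ℕ, m ≤ nC ∧ f i = (m : ℝ) - (nC : ℝ) / 2)
    (hmono : Monotone f) (q : ℕ) :
    {i : Fin nB |
        |((i : ℝ) - ((nB : ℝ) - 1) / 2) - f i| ≥ ((nB : ℝ) + (nC : ℝ) - 1) / 2 - q}.ncard
      ≤ q + 1 :=
  block_intertwining_count_bound_general nB nC hBC f hrange hmono q
end

section
/- Suppose n_C ≥ n_B ≥ 1, B = {−(n_B−1)/2, ..., (n_B−1)/2}, C* = {−n_C/2, ..., n_C/2}, and f*: B → C* is non-decreasing. Then there exists a constant function g*: B → C* such that for every real r, the number of b ∈ B with |b − g*(b)| ≥ r is at least the number of b with |b − f*(b)| ≥ r. -/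
open Finset

/-- Helper: a finset of `Fin n` whose casts lie in a real interval `[lo, hi]`
has cardinality at most `hi - lo + 1`. -/
private lemma card_le_of_bounds {n : ℕ} {I : Finset (Fin n)} {lo hi : ℝ}
    (hne : I.Nonempty) (h : ∀ i ∈ I, lo ≤ (i : ℝ) ∧ (i : ℝ) ≤ hi) :
    (I.card : ℝ) ≤ hi - lo + 1 := by
  obtain ⟨i0, hi0⟩ := hne
  have hlohi : lo ≤ hi := le_trans (h i0 hi0).1 (h i0 hi0).2
  have hinj : Set.InjOn (fun i : Fin n => ((i : ℕ) : ℤ)) I := by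
    intro a _ b _ hab
    dsimp only at hab
    exact Fin.ext (by exact_mod_cast hab)
  have hsub : I.image (fun i : Fin n => ((i : ℕ) : ℤ)) ⊆ Finset.Icc ⌈lo⌉ ⌊hi⌋ := by
    intro x hx
    rw [Finset.mem_image] at hx
    obtain ⟨i, hiI, rfl⟩ := hx
    rcases h i hiI with ⟨h1, h2⟩
    rw [Finset.mem_Icc]
    exact ⟨Int.ceil_le.mpr (by exact_mod_cast h1), Int.le_floor.mpr (by exact_mod_cast h2)⟩
  have hcard : I.card ≤ (⌊hi⌋ + 1 - ⌈lo⌉).toNat := by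
    have := Finset.card_le_card hsub
    rwa [Finset.card_image_of_injOn hinj, Int.card_Icc] at this
  have hfl : (⌊hi⌋ : ℝ) ≤ hi := Int.floor_le hi
  have hcl : lo ≤ (⌈lo⌉ : ℝ) := Int.le_ceil lo
  have h3 : ((⌊hi⌋ + 1 - ⌈lo⌉).toNat : ℝ) ≤ hi - lo + 1 := by
    rcases le_or_gt (⌊hi⌋ + 1 - ⌈lo⌉) 0 with hc | hc
    · rw [Int.toNat_of_nonpos hc]
      push_cast
      linarith
    · have heq : ((⌊hi⌋ + 1 - ⌈lo⌉).toNat : ℤ) = ⌊hi⌋ + 1 - ⌈lo⌉ := Int.toNat_of_nonneg hc.le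
      have : (((⌊hi⌋ + 1 - ⌈lo⌉).toNat : ℤ) : ℝ) = (⌊hi⌋ : ℝ) + 1 - (⌈lo⌉ : ℝ) := by
        rw [heq]; push_cast; ring
      rw [show (((⌊hi⌋ + 1 - ⌈lo⌉).toNat : ℤ) : ℝ) = ((⌊hi⌋ + 1 - ⌈lo⌉).toNat : ℝ) by push_cast; ring] at this
      linarith
  calc (I.card : ℝ) ≤ ((⌊hi⌋ + 1 - ⌈lo⌉).toNat : ℝ) := by exact_mod_cast hcard
    _ ≤ hi - lo + 1 := h3

/-- With `B`, `C*` as before and `f* : B → C*` non-decreasing, there is a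
constant function `g* ≡ c ∈ C*` such that for every `r`, the number of `b ∈ B` with
`|b − c| ≥ r` is at least the number of `b ∈ B` with `|b − f*(b)| ≥ r`. -/
theorem block_intertwining_constant_modification
    (nB nC : ℕ) (hnB : 1 ≤ nB) (hBC : nB ≤ nC)
    (f : Fin nB → ℝ)
    (hrange : ∀ i, ∃ m : ℕ, m ≤ nC ∧ f i = (m : ℝ) - (nC : ℝ) / 2)
    (hmono : Monotone f) :
    ∃ c : ℝ, (∃ m : ℕ, m ≤ nC ∧ c = (m : ℝ) - (nC : ℝ) / 2) ∧
      ∀ r : ℝ,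
        {i : Fin nB | |((i : ℝ) - ((nB : ℝ) - 1) / 2) - f i| ≥ r}.ncard ≤
        {i : Fin nB | |((i : ℝ) - ((nB : ℝ) - 1) / 2) - c| ≥ r}.ncard := by
  classical
  have hnB' : (1 : ℝ) ≤ (nB : ℝ) := by exact_mod_cast hnB
  have hBC' : (nB : ℝ) ≤ (nC : ℝ) := by exact_mod_cast hBC
  set b : Fin nB → ℝ := fun i => (i : ℝ) - ((nB : ℝ) - 1) / 2 with hbdef
  have hfub : ∀ i, f i ≤ (nC : ℝ) / 2 := by
    intro i
    obtain ⟨m, hm, hfi⟩ := hrange i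
    have : (m : ℝ) ≤ (nC : ℝ) := by exact_mod_cast hm
    rw [hfi]; linarith
  have hflb : ∀ i, -((nC : ℝ) / 2) ≤ f i := by
    intro i
    obtain ⟨m, hm, hfi⟩ := hrange i
    have : (0 : ℝ) ≤ (m : ℝ) := Nat.cast_nonneg m
    rw [hfi]; linarith
  have hile : ∀ i : Fin nB, (i : ℝ) ≤ (nB : ℝ) - 1 := by
    intro i
    have h1 : (i : ℕ) + 1 ≤ nB := i.is_lt
    have : ((i : ℕ) : ℝ) + 1 ≤ (nB : ℝ) := by exact_mod_cast h1
    linarith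
  have hige : ∀ i : Fin nB, (0 : ℝ) ≤ (i : ℝ) := fun i => Nat.cast_nonneg _
  -- the constant is nC/2
  refine ⟨(nC : ℝ) / 2, ⟨nC, le_refl _, by ring⟩, ?_⟩
  intro r
  -- distances to the constant
  have habsc : ∀ i : Fin nB, |b i - (nC : ℝ) / 2| = ((nB : ℝ) + (nC : ℝ) - 1) / 2 - (i : ℝ) := by
    intro i
    have h1 : b i - (nC : ℝ) / 2 ≤ 0 := by
      have := hile i; simp only [hbdef]; linarith
    rw [abs_of_nonpos h1]; simp only [hbdef]; ring
  set W : ℝ := ((nB : ℝ) + (nC : ℝ) - 1) / 2 - r with hWdef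
  -- convert ncard to finset card
  set S : Finset (Fin nB) := univ.filter (fun i => r ≤ |b i - f i|) with hSdef
  set T : Finset (Fin nB) := univ.filter (fun i => r ≤ |b i - (nC : ℝ) / 2|) with hTdef
  have hncard1 : {i : Fin nB | |((i : ℝ) - ((nB : ℝ) - 1) / 2) - f i| ≥ r}.ncard = S.card := by
    rw [show {i : Fin nB | |((i : ℝ) - ((nB : ℝ) - 1) / 2) - f i| ≥ r} = ↑S by
      ext i; simp [hSdef, hbdef, ge_iff_le]]
    exact Set.ncard_coe_finset _
  have hncard2 : {i : Fin nB | |((i : ℝ) - ((nB : ℝ) - 1) / 2) - (nC : ℝ) / 2| ≥ r}.ncard = T.card := by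
    rw [show {i : Fin nB | |((i : ℝ) - ((nB : ℝ) - 1) / 2) - (nC : ℝ) / 2| ≥ r} = ↑T by
      ext i; simp [hTdef, hbdef, ge_iff_le]]
    exact Set.ncard_coe_finset _
  rw [hncard1, hncard2]
  -- trivial if S is empty
  rcases S.eq_empty_or_nonempty with hSe | hSne
  · rw [hSe]; simp
  have hkB : S.card ≤ nB := by
    simpa using Finset.card_le_univ S
  have hkB' : (S.card : ℝ) ≤ (nB : ℝ) := by exact_mod_cast hkB
  -- KEY CLAIM: (S.card : ℝ) ≤ W + 1
  have key : (S.card : ℝ) ≤ W + 1 := by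
    rcases le_or_gt r (((nC : ℝ) - (nB : ℝ) + 1) / 2) with hr | hr
    · -- small r: trivial since S.card ≤ nB ≤ W + 1
      have : (nB : ℝ) ≤ W + 1 := by rw [hWdef]; linarith
      linarith
    -- big r
    have hr0 : 0 < r := by linarith
    set A : Finset (Fin nB) := S.filter (fun i => r ≤ f i - b i) with hAdef
    set Bl : Finset (Fin nB) := S.filter (fun i => r ≤ b i - f i) with hBldef
    have hSAB : S = A ∪ Bl := by
      ext i
      simp only [hAdef, hBldef, Finset.mem_union, Finset.mem_filter]
      constructor
      · intro hi
        have hi' := hi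
        rw [hSdef, Finset.mem_filter] at hi'
        rcases le_abs.mp hi'.2 with h | h
        · exact Or.inr ⟨hi, by linarith⟩
        · exact Or.inl ⟨hi, by linarith⟩
      · rintro (⟨hi, _⟩ | ⟨hi, _⟩) <;> exact hi
    have hdisj : Disjoint A Bl := by
      rw [Finset.disjoint_left]
      intro i hiA hiB
      rw [hAdef, Finset.mem_filter] at hiA
      rw [hBldef, Finset.mem_filter] at hiB
      linarith [hiA.2, hiB.2]
    have hcardsum : S.card = A.card + Bl.card := by
      rw [hSAB, Finset.card_union_of_disjoint hdisj]
    -- bounds for elements of A and Bl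
    have hAub : ∀ i ∈ A, (i : ℝ) ≤ W := by
      intro i hi
      rw [hAdef, Finset.mem_filter] at hi
      have h1 := hi.2
      have h2 := hfub i
      rw [hWdef]; simp only [hbdef] at h1; linarith
    have hBlb : ∀ j ∈ Bl, (nB : ℝ) - 1 - W ≤ (j : ℝ) := by
      intro j hj
      rw [hBldef, Finset.mem_filter] at hj
      have h1 := hj.2
      have h2 := hflb j
      rw [hWdef]; simp only [hbdef] at h1; linarith
    rcases A.eq_empty_or_nonempty with hAe | hAne
    · -- S = Bl
      have hSBl : S = Bl := by rw [hSAB, hAe, Finset.empty_union]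
      have : (Bl.card : ℝ) ≤ ((nB : ℝ) - 1) - ((nB : ℝ) - 1 - W) + 1 :=
        card_le_of_bounds (hSBl ▸ hSne) (fun j hj => ⟨hBlb j hj, hile j⟩)
      rw [hSBl]; linarith
    rcases Bl.eq_empty_or_nonempty with hBle | hBlne
    · -- S = A
      have hSA : S = A := by rw [hSAB, hBle, Finset.union_empty]
      have : (A.card : ℝ) ≤ W - 0 + 1 :=
        card_le_of_bounds (hSA ▸ hSne) (fun i hi => ⟨hige i, hAub i hi⟩)
      rw [hSA]; linarith
    -- both nonempty: mixed case
    set X : Finset (Fin nB) := A.filter (fun i => ∃ j ∈ Bl, i < j) with hXdef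
    have habove : ∀ i ∈ A, r ≤ f i - b i := by
      intro i hi; rw [hAdef, Finset.mem_filter] at hi; exact hi.2
    have hbelow : ∀ j ∈ Bl, r ≤ b j - f j := by
      intro j hj; rw [hBldef, Finset.mem_filter] at hj; exact hj.2
    have hgap : ∀ i ∈ A, ∀ j ∈ Bl, i < j → 2 * r ≤ (j : ℝ) - (i : ℝ) := by
      intro i hi j hj hij
      have h1 := habove i hi
      have h2 := hbelow j hj
      have h3 : f i ≤ f j := hmono hij.le
      simp only [hbdef] at h1 h2
      linarith
    rcases X.eq_empty_or_nonempty with hXe | hXne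
    · -- every below precedes every above
      have hord : ∀ i ∈ A, ∀ j ∈ Bl, j < i := by
        intro i hi j hj
        have hnotin : i ∉ X := by rw [hXe]; exact Finset.notMem_empty i
        have hne : j ≠ i := by
          intro h; subst h
          exact (Finset.disjoint_left.mp hdisj hi) hj
        have hnlt : ¬ i < j := by
          intro hlt
          exact hnotin (by rw [hXdef, Finset.mem_filter]; exact ⟨hi, j, hj, hlt⟩)
        rcases lt_trichotomy j i with h | h | h
        · exact h
        · exact absurd h hne
        · exact absurd h hnlt
      set iA : Fin nB := A.min' hAne with hiAdef
      set jB : Fin nB := Bl.max' hBlne with hjBdef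
      have hiAA : iA ∈ A := A.min'_mem hAne
      have hjBB : jB ∈ Bl := Bl.max'_mem hBlne
      have hord' : (jB : ℝ) + 1 ≤ (iA : ℝ) := by
        have := hord iA hiAA jB hjBB
        have : (jB : ℕ) + 1 ≤ (iA : ℕ) := this
        exact_mod_cast this
      have hAcard : (A.card : ℝ) ≤ W - (iA : ℝ) + 1 :=
        card_le_of_bounds hAne (fun i hi =>
          ⟨by exact_mod_cast A.min'_le i hi, hAub i hi⟩)
      have hBcard : (Bl.card : ℝ) ≤ (jB : ℝ) - ((nB : ℝ) - 1 - W) + 1 :=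
        card_le_of_bounds hBlne (fun j hj =>
          ⟨hBlb j hj, by exact_mod_cast Bl.le_max' j hj⟩)
      have : (S.card : ℝ) = (A.card : ℝ) + (Bl.card : ℝ) := by
        rw [hcardsum]; push_cast; ring
      -- S.card ≤ 2W - nB + 2 = nC + 1 - 2r ≤ W + 1 since 2r > nC - nB + 1
      rw [hWdef] at hAcard hBcard ⊢
      linarith
    · -- an above precedes a below
      set istar : Fin nB := X.max' hXne with histardef
      have histarX : istar ∈ X := X.max'_mem hXne
      have histarA : istar ∈ A := by
        have := histarX; rw [hXdef, Finset.mem_filter] at this; exact this.1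
      obtain ⟨j0, hj0Bl, hj0gt⟩ : ∃ j ∈ Bl, istar < j := by
        have := histarX; rw [hXdef, Finset.mem_filter] at this; exact this.2
      set Y : Finset (Fin nB) := Bl.filter (fun j => istar < j) with hYdef
      have hYne : Y.Nonempty := ⟨j0, by rw [hYdef, Finset.mem_filter]; exact ⟨hj0Bl, hj0gt⟩⟩
      set jstar : Fin nB := Y.min' hYne with hjstardef
      have hjstarY : jstar ∈ Y := Y.min'_mem hYne
      have hjstarBl : jstar ∈ Bl := by
        have := hjstarY; rw [hYdef, Finset.mem_filter] at this; exact this.1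
      have hij : istar < jstar := by
        have := hjstarY; rw [hYdef, Finset.mem_filter] at this; exact this.2
      have hgap' : 2 * r ≤ (jstar : ℝ) - (istar : ℝ) := hgap istar histarA jstar hjstarBl hij
      -- no element of S lies strictly between istar and jstar
      have hSIoo : Disjoint S (Finset.Ioo istar jstar) := by
        rw [Finset.disjoint_left]
        intro s hsS hsIoo
        rw [Finset.mem_Ioo] at hsIoo
        have hsAB : s ∈ A ∪ Bl := by rw [← hSAB]; exact hsS
        rcases Finset.mem_union.mp hsAB with hsA | hsBl
        · -- s ∈ A with s < jstar, so s ∈ X, so s ≤ istar, contradiction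
          have hsX : s ∈ X := by
            rw [hXdef, Finset.mem_filter]
            exact ⟨hsA, jstar, hjstarBl, hsIoo.2⟩
          exact absurd (X.le_max' s hsX) (not_le.mpr hsIoo.1)
        · -- s ∈ Bl with istar < s, so s ∈ Y, so jstar ≤ s, contradiction
          have hsY : s ∈ Y := by
            rw [hYdef, Finset.mem_filter]
            exact ⟨hsBl, hsIoo.1⟩
          exact absurd (Y.min'_le s hsY) (not_le.mpr hsIoo.2)
      have hunion : S.card + (Finset.Ioo istar jstar).card ≤ nB := by
        rw [← Finset.card_union_of_disjoint hSIoo]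
        simpa using Finset.card_le_univ (S ∪ Finset.Ioo istar jstar)
      have hIoocard : (Finset.Ioo istar jstar).card = (jstar : ℕ) - (istar : ℕ) - 1 :=
        Fin.card_Ioo istar jstar
      have hIoo' : 2 * r - 1 ≤ ((Finset.Ioo istar jstar).card : ℝ) := by
        rw [hIoocard]
        have h1 : (istar : ℕ) + 1 ≤ (jstar : ℕ) := hij
        have h2 : (((jstar : ℕ) - (istar : ℕ) - 1 : ℕ) : ℝ) = (jstar : ℝ) - (istar : ℝ) - 1 := by
          have : (jstar : ℕ) - (istar : ℕ) - 1 = (jstar : ℕ) - ((istar : ℕ) + 1) := by omega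
          rw [this, Nat.cast_sub h1]
          push_cast; ring
        rw [h2]; linarith
      have hfinal : (S.card : ℝ) + (2 * r - 1) ≤ (nB : ℝ) := by
        have h1 : (S.card : ℝ) + ((Finset.Ioo istar jstar).card : ℝ) ≤ (nB : ℝ) := by
          exact_mod_cast hunion
        linarith
      rw [hWdef]; linarith
  -- FINISH: build a subset of T of size S.card
  set U : Finset (Fin nB) := (Finset.range S.card).attachFin
    (fun m hm => lt_of_lt_of_le (Finset.mem_range.mp hm) hkB) with hUdef
  have hUcard : U.card = S.card := by
    rw [hUdef, Finset.card_attachFin, Finset.card_range]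
  have hUT : U ⊆ T := by
    intro i hi
    rw [hUdef, Finset.mem_attachFin, Finset.mem_range] at hi
    rw [hTdef, Finset.mem_filter]
    refine ⟨Finset.mem_univ i, ?_⟩
    rw [habsc i]
    have h1 : ((i : ℕ) : ℝ) + 1 ≤ (S.card : ℝ) := by exact_mod_cast hi
    rw [hWdef] at key
    linarith
  calc S.card = U.card := hUcard.symm
    _ ≤ T.card := Finset.card_le_card hUT
end

section
/- If n_C ≥ n_B, f*: B → C* is non-decreasing, and r_0 ≥ r_1 ≥ ... ≥ r_{n_B−1} are the values 1/2 + |b − f*(b)| (b ∈ B) listed in non-increasing order with multiplicity, then r_t ≤ (n_B + n_C)/2 − t for all 0 ≤ t ≤ n_B − 1. -/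
/-!
Write `f* b = m_b - n_C/2` with `m` a non-decreasing map into `{0, …, n_C}`. Doubling,
`1/2 + |b - f* b| > (n_B + n_C)/2 - t` forces the lattice point `(i, m_i)` of the `i`-th element
of `B` off the band `t - n_B < m_i - i ≤ n_C - t`. Points above the band have `i < t`, points
below it have `i ≥ n_B - t`, and since `m` is non-decreasing a point above the band never lies
`n_B - t` steps before a point below it. So `i ↦ i` above the band and `i ↦ i - (n_B - t)` below
it inject the off-band indices into `{0, …, t - 1}`: at most `t` of the values exceed
`(n_B + n_C)/2 - t`, which for a non-increasing listing is the bound on `r_t`.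
-/

open Finset

theorem Antitone.le_of_card_filter_lt_le {α : Type*} [LinearOrder α] {n : ℕ} {r : Fin n → α}
    (hr : Antitone r) {x : α} {t : Fin n} (h : #{i | x < r i} ≤ t) : r t ≤ x := by
  by_contra! hx
  have hIic : Iic t ⊆ ({i | x < r i} : Finset _) := fun i hi => by
    simp only [mem_Iic, mem_filter, mem_univ, true_and] at hi ⊢
    exact hx.trans_le (hr hi)
  have := card_le_card hIic
  rw [Fin.card_Iic] at this
  omega

theorem Monotone.card_filter_off_band_le {n N t : ℕ} {m : Fin n → ℕ} (hm : Monotone m)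
    (hmN : ∀ i, m i ≤ N) (htN : t ≤ N) :
    #{i | (N : ℤ) - t < m i - i ∨ (m i : ℤ) - i ≤ (t : ℤ) - n} ≤ t := by
  rcases lt_or_ge n t with htn | htn
  · exact (card_le_univ _).trans (by simpa using htn.le)
  let φ : Fin n → ℕ := fun i => if (N : ℤ) - t < m i - i then i else i + t - n
  calc _ ≤ #(range t) := card_le_card_of_injOn φ ?_ ?_
    _ = t := card_range t
  · intro i hi
    simp only [coe_filter, mem_univ, true_and, Set.mem_ofPred_eq, coe_range, Set.mem_Iio] at hi ⊢
    have := hmN i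
    have := i.isLt
    simp only [φ]
    split_ifs <;> omega
  · have above_below : ∀ a b : Fin n, (N : ℤ) - t < m a - a → (m b : ℤ) - b ≤ (t : ℤ) - n →
        (a : ℕ) ≠ b + t - n := by
      intro a b ha hb hab
      have := hm (show a ≤ b from Fin.le_def.mpr (by omega))
      omega
    intro i hi j hj hij
    simp only [coe_filter, mem_univ, true_and, Set.mem_ofPred_eq] at hi hj
    simp only [φ] at hij
    split_ifs at hij with h₁ h₂ h₂
    · exact Fin.ext hij
    · exact absurd hij (above_below i j h₁ (hj.resolve_left h₂))
    · exact absurd hij.symm (above_below j i h₂ (hi.resolve_left h₁))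
    · exact Fin.ext (by omega)

theorem off_band_of_lt_half_add_abs {n N t i m : ℕ}
    (h : ((n : ℝ) + N) / 2 - t < 1 / 2 + |(i : ℝ) - ((n : ℝ) - 1) / 2 - ((m : ℝ) - N / 2)|) :
    (N : ℤ) - t < m - i ∨ (m : ℤ) - i ≤ (t : ℤ) - n := by
  rcases lt_abs.mp (sub_lt_iff_lt_add'.mpr h) with h | h
  · right
    have : (((n : ℤ) - t - 1 : ℤ) : ℝ) < ((i - m : ℤ) : ℝ) := by push_cast; linarith
    have := Int.cast_lt.mp this
    omega
  · left
    exact_mod_cast (by linarith : ((N : ℝ) - t) < m - i)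

theorem block_intertwining_sorted_bound_general
    (nB nC : ℕ) (hBC : nB ≤ nC)
    (f : Fin nB → ℝ)
    (hrange : ∀ i, ∃ m : ℕ, m ≤ nC ∧ f i = (m : ℝ) - (nC : ℝ) / 2)
    (hmono : Monotone f)
    (r : Fin nB → ℝ) (hr : Antitone r)
    (hperm : ∃ e : Equiv.Perm (Fin nB),
      ∀ i, r i = 1 / 2 + |((e i : ℕ) : ℝ) - ((nB : ℝ) - 1) / 2 - f (e i)|) :
    ∀ t : Fin nB, r t ≤ ((nB : ℝ) + (nC : ℝ)) / 2 - (t : ℝ) := by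
  obtain ⟨e, he⟩ := hperm
  choose m hmN hf using hrange
  have hm : Monotone m := fun i j hij => by
    have := hmono hij
    rw [hf, hf] at this
    exact_mod_cast (by linarith : (m i : ℝ) ≤ m j)
  intro t
  apply hr.le_of_card_filter_lt_le
  set X := ((nB : ℝ) + nC) / 2 - t
  calc #{i | X < r i} = #{i : Fin nB | X < 1 / 2 + |((i : ℕ) : ℝ) - ((nB : ℝ) - 1) / 2 - f i|} :=
        card_equiv e fun i => by simp [he]
    _ ≤ #{i | (nC : ℤ) - t < m i - i ∨ (m i : ℤ) - i ≤ (t : ℤ) - nB} :=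
        card_le_card <| monotone_filter_right _ fun i _ hi =>
          off_band_of_lt_half_add_abs (by rwa [← hf])
    _ ≤ t := hm.card_filter_off_band_le hmN (by omega)

/-- If `n_C ≥ n_B`, `f* : B → C*` is non-decreasing, and
`r_0 ≥ r_1 ≥ … ≥ r_{n_B−1}` lists the values `1/2 + |b − f*(b)|` (for `b ∈ B`) in
non-increasing order with multiplicity, then `r_t ≤ (n_B + n_C)/2 − t` for all `t`. -/
theorem block_intertwining_sorted_bound
    (nB nC : ℕ) (hnB : 1 ≤ nB) (hBC : nB ≤ nC)
    (f : Fin nB → ℝ)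
    (hrange : ∀ i, ∃ m : ℕ, m ≤ nC ∧ f i = (m : ℝ) - (nC : ℝ) / 2)
    (hmono : Monotone f)
    (r : Fin nB → ℝ) (hr : Antitone r)
    (hperm : ∃ e : Equiv.Perm (Fin nB),
      ∀ i, r i = 1 / 2 + |((e i : ℕ) : ℝ) - ((nB : ℝ) - 1) / 2 - f (e i)|) :
    ∀ t : Fin nB, r t ≤ ((nB : ℝ) + (nC : ℝ)) / 2 - (t : ℝ) :=
  block_intertwining_sorted_bound_general nB nC hBC f hrange hmono r hr hperm
end

section
/- On any interval I ⊂ R of length s > 0, the average value of log⁺(|x|^{-1}) is at most 1 − log(s/2) if s < 2, and at most 2/s if s ≥ 2. -/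
/-!
The integrand is `g |x|` with `g t = max (-log t) 0` antitone on `t > 0`. For such a function
the window `[-s/2, s/2]` has the largest integral among all windows `[a, a + s]`: if
`a ≥ -s/2`, the part `[s/2, a + s]` of the window is the translate by `s` of `[-s/2, a]`, whose
points are closer to the origin. Hence the integral is at most `2 ∫₀^{s/2} log⁺ (1/x) dx`, which
equals `s - s log (s/2)` when `s ≤ 2` and `2` when `s ≥ 2`.
-/

open Real MeasureTheory intervalIntegral Set

section SymmetricDecreasing

variable {g : ℝ → ℝ}

theorem integral_comp_abs_le_integral_centered_of_le (hg : AntitoneOn g (Ioi 0))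
    (hint : ∀ a b : ℝ, IntervalIntegrable (fun x => g |x|) volume a b) {a s : ℝ} (hs : 0 ≤ s)
    (ha : -(s / 2) ≤ a) :
    ∫ x in a..a + s, g |x| ≤ ∫ x in -(s / 2)..s / 2, g |x| := by
  have hshift : ∫ x in s / 2..a + s, g |x| = ∫ x in -(s / 2)..a, g |x + s| := by
    rw [integral_comp_add_right (fun x => g |x|)]
    ring_nf
  have hmirror : ∫ x in -(s / 2)..a, g |x + s| ≤ ∫ x in -(s / 2)..a, g |x| := by
    refine integral_mono_ae_restrict ha ?_ (hint _ _) ?_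
    · simpa using (hint (-(s / 2) + s) (a + s)).comp_add_right s
    filter_upwards [ae_restrict_of_ae (Measure.ae_ne volume 0),
      ae_restrict_mem measurableSet_Icc] with x hx0 hx
    have hfar : |x| ≤ |x + s| := abs_le_abs (by linarith) (by linarith [hx.1])
    exact hg (abs_pos.2 hx0) ((abs_pos.2 hx0).trans_le hfar) hfar
  rw [← integral_add_adjacent_intervals (hint a (s / 2)) (hint (s / 2) (a + s)), hshift,
    ← integral_add_adjacent_intervals (hint (-(s / 2)) a) (hint a (s / 2))]
  linarith

theorem integral_comp_abs_le_integral_centered (hg : AntitoneOn g (Ioi 0))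
    (hint : ∀ a b : ℝ, IntervalIntegrable (fun x => g |x|) volume a b) (a : ℝ) {s : ℝ}
    (hs : 0 ≤ s) :
    ∫ x in a..a + s, g |x| ≤ ∫ x in -(s / 2)..s / 2, g |x| := by
  rcases le_or_gt (-(s / 2)) a with ha | ha
  · exact integral_comp_abs_le_integral_centered_of_le hg hint hs ha
  · have hreflect : ∫ x in a..a + s, g |x| = ∫ x in -(a + s)..-(a + s) + s, g |x| := by
      have := integral_comp_neg (a := a) (b := a + s) (fun x => g |x|)
      simp only [abs_neg] at this
      rw [this]
      ring_nf
    rw [hreflect]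
    exact integral_comp_abs_le_integral_centered_of_le hg hint hs (by linarith)

theorem integral_comp_abs_neg_eq_two_mul
    (hint : ∀ a b : ℝ, IntervalIntegrable (fun x => g |x|) volume a b) (r : ℝ) : ∫ x in -r..r, g |x| = 2 * ∫ x in 0..r, g |x| := by
  have hneg : ∫ x in -r..0, g |x| = ∫ x in 0..r, g |x| := by
    simpa [abs_neg] using (integral_comp_neg (a := 0) (b := r) (fun x => g |x|)).symm
  rw [← integral_add_adjacent_intervals (hint (-r) 0) (hint 0 r), hneg]
  ring

end SymmetricDecreasing

theorem max_log_inv_abs_zero_eq (x : ℝ) : max (log |x|⁻¹) 0 = max (-log x) 0 := by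
  rw [log_inv, log_abs]

theorem antitoneOn_max_log_inv_zero : AntitoneOn (fun t : ℝ => max (log t⁻¹) 0) (Ioi 0) :=
  fun _ hx _ _ hxy => by
    simp only [log_inv]
    exact max_le_max (neg_le_neg (log_le_log hx hxy)) le_rfl

theorem intervalIntegrable_max_log_inv_abs_zero (a b : ℝ) :
    IntervalIntegrable (fun x : ℝ => max (log |x|⁻¹) 0) volume a b := by
  simp only [max_log_inv_abs_zero_eq]
  exact ⟨intervalIntegrable_log'.neg.1.pos_part, intervalIntegrable_log'.neg.2.pos_part⟩

theorem integral_max_log_inv_abs_zero_of_le_one {r : ℝ} (h0 : 0 ≤ r) (h1 : r ≤ 1) :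
    ∫ x in 0..r, max (log |x|⁻¹) 0 = r - r * log r := by
  have hpos : EqOn (fun x : ℝ => max (log |x|⁻¹) 0) (fun x => -log x) (uIcc 0 r) := by
    intro x hx
    rw [uIcc_of_le h0] at hx
    simp only [max_log_inv_abs_zero_eq, max_eq_left_iff, neg_nonneg]
    exact log_nonpos hx.1 (hx.2.trans h1)
  rw [integral_congr hpos, intervalIntegral.integral_neg, integral_log_from_zero]
  ring

theorem integral_max_log_inv_abs_zero_of_one_le {r : ℝ} (h1 : 1 ≤ r) :
    ∫ x in 0..r, max (log |x|⁻¹) 0 = 1 := by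
  have htail : EqOn (fun x : ℝ => max (log |x|⁻¹) 0) (fun _ => 0) (uIcc 1 r) := by
    intro x hx
    rw [uIcc_of_le h1] at hx
    simp only [max_log_inv_abs_zero_eq, max_eq_right_iff, neg_nonpos]
    exact log_nonneg hx.1
  rw [← integral_add_adjacent_intervals (intervalIntegrable_max_log_inv_abs_zero 0 1)
    (intervalIntegrable_max_log_inv_abs_zero 1 r), integral_congr htail,
    integral_max_log_inv_abs_zero_of_le_one zero_le_one le_rfl]
  simp

/-- On any interval `I = [a, a+s]` of length `s > 0`, the average value of
`log⁺(|x|⁻¹)` is at most `1 − log(s/2)` if `s < 2`, and at most `2/s` if `s ≥ 2`. -/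
theorem average_logPlus_inv_abs_bound (a s : ℝ) (hs : 0 < s) :
    (s < 2 →
      (1 / s) * ∫ x in a..(a + s), max (Real.log |x|⁻¹) 0 ≤ 1 - Real.log (s / 2)) ∧
    (2 ≤ s →
      (1 / s) * ∫ x in a..(a + s), max (Real.log |x|⁻¹) 0 ≤ 2 / s) := by
  have hbound : ∫ x in a..a + s, max (log |x|⁻¹) 0 ≤ 2 * ∫ x in 0..s / 2, max (log |x|⁻¹) 0 := by
    rw [← integral_comp_abs_neg_eq_two_mul (g := fun t => max (log t⁻¹) 0)
      intervalIntegrable_max_log_inv_abs_zero]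
    exact integral_comp_abs_le_integral_centered antitoneOn_max_log_inv_zero
      intervalIntegrable_max_log_inv_abs_zero a hs.le
  rw [one_div, inv_mul_le_iff₀ hs, inv_mul_le_iff₀ hs]
  refine ⟨fun hs2 => ?_, fun hs2 => ?_⟩
  · rw [integral_max_log_inv_abs_zero_of_le_one (by positivity) (by linarith)] at hbound
    linarith
  · rw [integral_max_log_inv_abs_zero_of_one_le (by linarith)] at hbound
    rw [mul_div_cancel₀ _ hs.ne']
    linarith
end
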